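/- arXiv:2303.17665 — 6 statements merged into one kernel-verified Lean document; each statement's English description precedes it below -/
import Mathlib

section
/- Let Q and F be finite sets, let L, U : F → Q be injective maps, and let 𝔞 : Q \ U(F) → Q \ L(F) be an injective map (where U(F), L(F) denote the images of U and L). Let φ : Q → Q be a bijection. Fix f ∈ F and define a sequence by g₁ = φ(L(f)) and, whenever gᵢ ∉ U(F), g_{i+1} = φ(𝔞(gᵢ)). Then there exists a finite index k ≥ 1 such that g_k ∈ U(F); i.e., the sequence terminates after finitely many steps. -/
/-- Abstract version of Lemma 3.4 (finiteness of the sequence `g^φ(f)`):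
`Q` is the set of triangles of the induced triangulation, `F` the positive-weight
faces, `L`/`U` lowermost/uppermost copies, `a` the "immediately above" map
(injective on the complement of the range of `U`, with values outside the range
of `L`), and `φ` a combinatorial automorphism.  Any sequence with
`g 1 = φ (L f)` and `g (i+1) = φ (a (g i))` as long as `g i ∉ range U`
must hit the range of `U` after finitely many steps. -/
theorem sequence_terminates {Q F : Type*} [Fintype Q] [Fintype F]
    (L U : F → Q) (hL : Function.Injective L) (hU : Function.Injective U)
    (a : Q → Q)
    (ha_inj : ∀ x ∉ Set.range U, ∀ y ∉ Set.range U, a x = a y → x = y)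
    (ha_range : ∀ x ∉ Set.range U, a x ∉ Set.range L)
    (φ : Q ≃ Q) (f : F)
    (g : ℕ → Q) (hg1 : g 1 = φ (L f))
    (hgrec : ∀ i ≥ 1, g i ∉ Set.range U → g (i + 1) = φ (a (g i))) :
    ∃ k ≥ 1, g k ∈ Set.range U := by
  by_contra hcon
  push_neg at hcon
  -- hcon : ∀ k, 1 ≤ k → g k ∉ Set.range U
  have key : ∀ i j, 1 ≤ i → i < j → g i ≠ g j := by
    intro i
    induction i using Nat.strong_induction_on with
    | _ i ih =>
      intro j hi hij heq
      have hjrec : g j = φ (a (g (j - 1))) := by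
        have := hgrec (j - 1) (by omega) (hcon (j - 1) (by omega))
        have hj1 : j - 1 + 1 = j := by omega
        rwa [hj1] at this
      rcases Nat.lt_or_ge i 2 with h1 | h2
      · -- i = 1
        have hi1 : i = 1 := by omega
        subst hi1
        rw [hg1, hjrec] at heq
        have hLa : L f = a (g (j - 1)) := φ.injective heq
        exact ha_range (g (j - 1)) (hcon (j - 1) (by omega)) (hLa ▸ ⟨f, rfl⟩)
      · -- i ≥ 2
        have hirec : g i = φ (a (g (i - 1))) := by
          have := hgrec (i - 1) (by omega) (hcon (i - 1) (by omega))
          have hi1 : i - 1 + 1 = i := by omega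
          rwa [hi1] at this
        rw [hirec, hjrec] at heq
        have := ha_inj (g (i - 1)) (hcon (i - 1) (by omega))
          (g (j - 1)) (hcon (j - 1) (by omega)) (φ.injective heq)
        exact ih (i - 1) (by omega) (j - 1) (by omega) (by omega) this
  have hinj : Function.Injective (fun n : ℕ => g (n + 1)) := by
    intro m n hmn
    simp only at hmn
    by_contra hne
    rcases Nat.lt_or_ge m n with h | h
    · exact key (m + 1) (n + 1) (by omega) (by omega) hmn
    · exact key (n + 1) (m + 1) (by omega) (by omega) hmn.symm
  obtain ⟨m, n, hne, heq⟩ := Finite.exists_ne_map_eq_of_infinite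
    (fun n : ℕ => g (n + 1))
  exact hne (hinj heq)
end

section
/- Let Q and F be finite sets, L, U : F → Q injective, 𝔞 : Q \ U(F) → Q \ L(F) injective, and φ : Q → Q a bijection. For each f ∈ F let last(f) ∈ U(F) denote the first element of the sequence g₁ = φ(L(f)), g_{i+1} = φ(𝔞(gᵢ)) that lies in U(F) (which exists). Then the map f ↦ last(f) is injective: if f ≠ f′ then last(f) ≠ last(f′). -/
private theorem last_injective_aux {Q F : Type*}
    (L U : F → Q) (hL : Function.Injective L)
    (a : Q → Q)
    (ha_inj : ∀ x ∉ Set.range U, ∀ y ∉ Set.range U, a x = a y → x = y)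
    (ha_range : ∀ x ∉ Set.range U, a x ∉ Set.range L)
    (φ : Q ≃ Q) (f f' : F) (hff' : f ≠ f')
    (g g' : ℕ → Q) (k k' : ℕ) (hk : 1 ≤ k) (hk' : 1 ≤ k')
    (hg1 : g 1 = φ (L f)) (hg'1 : g' 1 = φ (L f'))
    (hgrec : ∀ i, 1 ≤ i → i < k → g (i + 1) = φ (a (g i)))
    (hg'rec : ∀ i, 1 ≤ i → i < k' → g' (i + 1) = φ (a (g' i)))
    (hgfirst : ∀ i, 1 ≤ i → i < k → g i ∉ Set.range U)
    (hg'first : ∀ i, 1 ≤ i → i < k' → g' i ∉ Set.range U)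
    (hkk' : k ≤ k') :
    g k ≠ g' k' := by
  intro h
  have claim : ∀ j, j ≤ k - 1 → g (k - j) = g' (k' - j) := by
    intro j
    induction j with
    | zero => intro _; simpa using h
    | succ j ih =>
      intro hj
      have hj' : j ≤ k - 1 := by omega
      have ihj := ih hj'
      set i := k - j - 1 with hi
      set i' := k' - j - 1 with hi'
      have h1 : 1 ≤ i := by omega
      have h2 : i < k := by omega
      have h1' : 1 ≤ i' := by omega
      have h2' : i' < k' := by omega
      have e1 : k - j = i + 1 := by omega
      have e2 : k' - j = i' + 1 := by omega
      rw [e1, e2, hgrec i h1 h2, hg'rec i' h1' h2'] at ihj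
      have := ha_inj (g i) (hgfirst i h1 h2) (g' i') (hg'first i' h1' h2')
        (φ.injective ihj)
      have e3 : k - (j + 1) = i := by omega
      have e4 : k' - (j + 1) = i' := by omega
      rw [e3, e4]; exact this
  have key := claim (k - 1) le_rfl
  have e : k - (k - 1) = 1 := by omega
  rw [e, hg1] at key
  rcases eq_or_lt_of_le hkk' with heq | hlt
  · have e' : k' - (k - 1) = 1 := by omega
    rw [e', hg'1] at key
    exact hff' (hL (φ.injective key))
  · set m := k' - k with hm
    have e' : k' - (k - 1) = m + 1 := by omega
    have h1 : 1 ≤ m := by omega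
    have h2 : m < k' := by omega
    rw [e', hg'rec m h1 h2] at key
    exact ha_range (g' m) (hg'first m h1 h2) (φ.injective key ▸ ⟨f, rfl⟩)

/-- Abstract version of the second assertion of Lemma 3.4: the first element of
the sequence `g₁ = φ (L f)`, `g_{i+1} = φ (a (g i))` lying in the range of `U`
is distinct for distinct faces `f ≠ f'`. -/
theorem last_injective {Q F : Type*} [Fintype Q] [Fintype F]
    (L U : F → Q) (hL : Function.Injective L) (hU : Function.Injective U)
    (a : Q → Q)
    (ha_inj : ∀ x ∉ Set.range U, ∀ y ∉ Set.range U, a x = a y → x = y)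
    (ha_range : ∀ x ∉ Set.range U, a x ∉ Set.range L)
    (φ : Q ≃ Q) (f f' : F) (hff' : f ≠ f')
    (g g' : ℕ → Q) (k k' : ℕ) (hk : 1 ≤ k) (hk' : 1 ≤ k')
    (hg1 : g 1 = φ (L f)) (hg'1 : g' 1 = φ (L f'))
    (hgrec : ∀ i, 1 ≤ i → i < k → g (i + 1) = φ (a (g i)))
    (hg'rec : ∀ i, 1 ≤ i → i < k' → g' (i + 1) = φ (a (g' i)))
    (hgfirst : ∀ i, 1 ≤ i → i < k → g i ∉ Set.range U)
    (hg'first : ∀ i, 1 ≤ i → i < k' → g' i ∉ Set.range U)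
    (hgk : g k ∈ Set.range U) (hg'k' : g' k' ∈ Set.range U) :
    g k ≠ g' k' := by
  rcases le_total k k' with hle | hle
  · exact last_injective_aux L U hL a ha_inj ha_range φ f f' hff' g g' k k'
      hk hk' hg1 hg'1 hgrec hg'rec hgfirst hg'first hle
  · exact (last_injective_aux L U hL a ha_inj ha_range φ f' f hff'.symm g' g k' k
      hk' hk hg'1 hg1 hg'rec hgrec hg'first hgfirst hle).symm
end

section
/- Let Q and F be finite sets, L, U : F → Q injective, 𝔞 : Q \ U(F) → Q \ L(F) injective, and φ : Q → Q a bijection. Define r : F → F by r(f) = U⁻¹(last(f)), where last(f) is the first element of the sequence g₁ = φ(L(f)), g_{i+1} = φ(𝔞(gᵢ)) lying in U(F). Then r is a bijection of F. -/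
private lemma regluing_aux {Q F : Type*}
    (L U : F → Q)
    (a : Q → Q)
    (ha_inj : ∀ x ∉ Set.range U, ∀ y ∉ Set.range U, a x = a y → x = y)
    (ha_range : ∀ x ∉ Set.range U, a x ∉ Set.range L)
    (φ : Q ≃ Q)
    (f f' : F) (g g' : ℕ → Q) (k k' : ℕ)
    (hk : 1 ≤ k) (hk' : 1 ≤ k')
    (hs : g 1 = φ (L f)) (hs' : g' 1 = φ (L f'))
    (hstep : ∀ i, 1 ≤ i → i < k → g i ∉ Set.range U ∧ g (i + 1) = φ (a (g i)))
    (hstep' : ∀ i, 1 ≤ i → i < k' → g' i ∉ Set.range U ∧ g' (i + 1) = φ (a (g' i)))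
    (hkk' : k ≤ k')
    (heq : g k = g' k') : L f = L f' := by
  have claim : ∀ j, j ≤ k - 1 → g (k - j) = g' (k' - j) := by
    intro j
    induction j with
    | zero => intro _; simpa using heq
    | succ j ih =>
      intro hj
      have ihe := ih (by omega)
      set i := k - (j + 1) with hi
      set i' := k' - (j + 1) with hi'
      have h1 : 1 ≤ i := by omega
      have h2 : i < k := by omega
      have h1' : 1 ≤ i' := by omega
      have h2' : i' < k' := by omega
      obtain ⟨hmem, hstepi⟩ := hstep i h1 h2
      obtain ⟨hmem', hstepi'⟩ := hstep' i' h1' h2'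
      have e1 : i + 1 = k - j := by omega
      have e1' : i' + 1 = k' - j := by omega
      rw [e1] at hstepi
      rw [e1'] at hstepi'
      have : φ (a (g i)) = φ (a (g' i')) := by rw [← hstepi, ← hstepi', ihe]
      have haa : a (g i) = a (g' i') := φ.injective this
      have := ha_inj _ hmem _ hmem' haa
      rw [this]
  have h1 : g 1 = g' (k' - (k - 1)) := by
    have := claim (k - 1) le_rfl
    have e : k - (k - 1) = 1 := by omega
    rwa [e] at this
  by_cases hkeq : k = k'
  · have e : k' - (k - 1) = 1 := by omega
    rw [e, hs, hs'] at h1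
    exact φ.injective h1
  · exfalso
    have hklt : k < k' := lt_of_le_of_ne hkk' hkeq
    set m := k' - (k - 1) with hm
    have h1' : 1 ≤ m - 1 := by omega
    have h2' : m - 1 < k' := by omega
    obtain ⟨hmem', hstepi'⟩ := hstep' (m - 1) h1' h2'
    have e : m - 1 + 1 = m := by omega
    rw [e] at hstepi'
    rw [hstepi', hs] at h1
    have : L f = a (g' (m - 1)) := φ.injective h1
    exact ha_range _ hmem' ⟨f, this⟩

/-- Abstract version of the construction of the regluing bijection
`r^φ : F_w⁺ → F_w⁻` (Section 3.5): the map `r` defined by `U (r f) = last f`,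
where `last f` is the first element of the sequence `g₁ = φ (L f)`,
`g_{i+1} = φ (a (g i))` lying in the range of `U`, is a bijection of `F`. -/
theorem regluing_bijective {Q F : Type*} [Fintype Q] [Fintype F]
    (L U : F → Q) (hL : Function.Injective L) (hU : Function.Injective U)
    (a : Q → Q)
    (ha_inj : ∀ x ∉ Set.range U, ∀ y ∉ Set.range U, a x = a y → x = y)
    (ha_range : ∀ x ∉ Set.range U, a x ∉ Set.range L)
    (φ : Q ≃ Q) (r : F → F)
    (hr : ∀ f : F, ∃ (g : ℕ → Q) (k : ℕ), 1 ≤ k ∧ g 1 = φ (L f) ∧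
      (∀ i, 1 ≤ i → i < k → g i ∉ Set.range U ∧ g (i + 1) = φ (a (g i))) ∧
      g k ∈ Set.range U ∧ g k = U (r f)) :
    Function.Bijective r := by
  rw [← Finite.injective_iff_bijective]
  intro f f' hff'
  obtain ⟨g, k, hk1, hgs, hgstep, _, hglast⟩ := hr f
  obtain ⟨g', k', hk1', hgs', hgstep', _, hglast'⟩ := hr f'
  have heq : g k = g' k' := by rw [hglast, hglast', hff']
  rcases le_total k k' with h | h
  · exact hL (regluing_aux L U a ha_inj ha_range φ f f' g g' k k' hk1 hk1' hgs hgs'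
      hgstep hgstep' h heq)
  · exact (hL (regluing_aux L U a ha_inj ha_range φ f' f g' g k' k hk1' hk1 hgs' hgs
      hgstep' hgstep h heq.symm)).symm
end

section
/- Every real root x of z⁶ − 2z⁵ − 2z + 1 satisfies x ≤ (1 + √17 + √(2(1 + √17)))/4; that is, λ = (1 + √17 + √(2(1+√17)))/4 is the largest real root of z⁶ − 2z⁵ − 2z + 1. -/
/-- `λ = (1 + √17 + √(2(1 + √17)))/4` is the largest real root of
`z⁶ − 2z⁵ − 2z + 1`: every real root `x` satisfies `x ≤ λ`. -/
theorem stretch_factor_largest_root :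
    ∀ x : ℝ, x^6 - 2*x^5 - 2*x + 1 = 0 →
      x ≤ (1 + Real.sqrt 17 + Real.sqrt (2*(1 + Real.sqrt 17)))/4 := by
  intro x hx
  set s := Real.sqrt 17 with hs_def
  have hs : s^2 = 17 := Real.sq_sqrt (by norm_num)
  have hs0 : (0:ℝ) ≤ s := Real.sqrt_nonneg _
  have hs4 : s > 4 := by nlinarith
  set t := Real.sqrt (2*(1 + s)) with ht_def
  have ht : t^2 = 2*(1 + s) := Real.sq_sqrt (by nlinarith)
  have ht0 : (0:ℝ) ≤ t := Real.sqrt_nonneg _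
  by_contra h
  push_neg at h
  -- x > λ
  have hA : x^2 - x + 1 > 0 := by nlinarith [sq_nonneg (x - 1/2)]
  have hC : x^2 - (1-s)/2*x + 1 > 0 := by
    nlinarith [sq_nonneg (x - (1-s)/4)]
  have hB : x^2 - (1+s)/2*x + 1 > 0 := by
    have hx1 : x - (1+s)/4 > t/4 := by linarith
    nlinarith [sq_nonneg (x - (1+s)/4)]
  have h2 : (x^2 - (1+s)/2*x + 1)*(x^2 - (1-s)/2*x + 1)
      = x^4 - x^3 - 2*x^2 - x + 1 := by
    linear_combination (-(x^2)/4) * hs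
  have key : (x^2 - x + 1)*((x^2 - (1+s)/2*x + 1)*(x^2 - (1-s)/2*x + 1))
      = x^6 - 2*x^5 - 2*x + 1 := by rw [h2]; ring
  nlinarith [mul_pos hA (mul_pos hB hC)]
end

section
/- In the Laurent polynomial ring ℤ[a, a⁻¹], there is no integer k and no sign ε ∈ {1, −1} such that 4(a + 1) = ε·a^k·4(a − 1). In other words, the Laurent polynomials 4(a+1) and 4(a−1) are not equal up to multiplication by a unit ±a^k. -/
/-- In `ℤ[a, a⁻¹]`, the Laurent polynomials `4(a+1)` and `4(a−1)` are not equal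
up to multiplication by a unit `±aᵏ`. -/
theorem taut_polynomials_distinct :
    ¬ ∃ (k : ℤ) (ε : ℤ), (ε = 1 ∨ ε = -1) ∧
      (4 * (LaurentPolynomial.T 1 + 1) : LaurentPolynomial ℤ) =
        LaurentPolynomial.C ε * LaurentPolynomial.T k *
          (4 * (LaurentPolynomial.T 1 - 1)) := by
  rintro ⟨k, ε, -, h⟩
  -- at `a = 1` the left side is `8` and the right side vanishes
  have h_one := congrArg (LaurentPolynomial.eval₂ (RingHom.id ℤ) 1) h
  simp [map_ofNat] at h_one
end

section
/- In the Laurent polynomial ring ℤ[a, a⁻¹], there is no integer k and no sign ε ∈ {1, −1} such that 8(a − 1)(a + 1)³ = ε·a^k·8(a − 1)³(a + 1). -/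
/-!
Evaluating at `a = 2` sends `8(a − 1)(a + 1)³` to `216` and `ε aᵏ · 8(a − 1)³(a + 1)` to
`ε 2ᵏ · 24`, so such an identity would force `2ᵏ = 9`, which `2³ < 9 < 2⁴` rules out.
-/

open LaurentPolynomial

noncomputable def evalTwo : ℤ[T;T⁻¹] →+* ℚ :=
  eval₂ (Int.castRingHom ℚ) (Units.mk0 2 two_ne_zero)

@[simp]
lemma evalTwo_T (n : ℤ) : evalTwo (T n) = 2 ^ n := by
  simp [evalTwo]

@[simp]
lemma evalTwo_C (z : ℤ) : evalTwo (C z) = z := by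
  simp [evalTwo]

lemma two_zpow_ne_nine (k : ℤ) : (2 : ℚ) ^ k ≠ 9 :=
  (zpow_right_mono₀ one_le_two).ne_of_lt_of_lt_int 3 (by norm_num) (by norm_num) k

/-- In `ℤ[a, a⁻¹]`, the Laurent polynomials `8(a−1)(a+1)³` and `8(a−1)³(a+1)`
are not equal up to multiplication by a unit `±aᵏ`. -/
theorem veering_polynomials_distinct :
    ¬ ∃ (k : ℤ) (ε : ℤ), (ε = 1 ∨ ε = -1) ∧
      (8 * (LaurentPolynomial.T 1 - 1) * (LaurentPolynomial.T 1 + 1)^3 :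
          LaurentPolynomial ℤ) =
        LaurentPolynomial.C ε * LaurentPolynomial.T k *
          (8 * (LaurentPolynomial.T 1 - 1)^3 * (LaurentPolynomial.T 1 + 1)) := by
  rintro ⟨k, ε, hε, h⟩
  have h_eval : (216 : ℚ) = ε * 2 ^ k * 24 := by
    have := congrArg evalTwo h
    simp only [map_mul, map_sub, map_add, map_pow, map_one, map_ofNat, evalTwo_T,
      evalTwo_C, zpow_one] at this
    linear_combination this
  have h_pos : (0 : ℚ) < 2 ^ k := zpow_pos two_pos k
  apply two_zpow_ne_nine k
  rcases hε with rfl | rfl <;> push_cast at h_eval <;> linarith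
end
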